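/- arXiv:2203.08196 — 5 statements merged into one kernel-verified Lean document; each statement's English description precedes it below -/
import Mathlib

section
/- Let d ≥ 1, K > 0, and z ∈ ℂ^d with Im(z_j) < 0 for all j and Σ_j Im(z_j) < −1. Then the generalized Fourier transform of the call-on-min payoff P(x) = max(min(e^{x_1},…,e^{x_d}) − K, 0) is P̂(z) = K^{1 − i Σ_j z_j} / ((i(Σ_j z_j) − 1) · ∏_j (i z_j)). -/
/-!
With `m = min_j x_j`, the payoff is `max (e^m - K) 0 = ∫_{log K}^∞ e^t ∏_j 1{t < x_j} dt`, so the
transform is the integral over `ℝ^d × ℝ` of `callKernel (log K) (i z)`. The integrability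
conditions make this kernel integrable, and by Fubini we may integrate in `x` first: the integrand
then factorises into `∏_j ∫_t^∞ e^{-i z_j u} du = ∏_j e^{-i z_j t} / (i z_j)`, and what remains is
`∫_{log K}^∞ e^{(1 - i ∑_j z_j) t} dt`.
-/

open MeasureTheory Set
open scoped Real Complex

lemma lt_ciInf_iff_of_finite {ι α : Type*} [Nonempty ι] [Finite ι]
    [ConditionallyCompleteLinearOrder α] {f : ι → α} {a : α} : a < ⨅ i, f i ↔ ∀ i, a < f i := by
  obtain ⟨i₀, hi₀⟩ := exists_eq_ciInf_of_finite (f := f)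
  exact ⟨fun h i => h.trans_le (ciInf_le (finite_range f).bddBelow i), fun h => hi₀ ▸ h i₀⟩

lemma Real.exp_ciInf_of_finite {ι : Type*} [Nonempty ι] [Finite ι] (f : ι → ℝ) :
    rexp (⨅ i, f i) = ⨅ i, rexp (f i) :=
  Real.exp_monotone.map_ciInf_of_continuousAt Real.continuous_exp.continuousAt
    (finite_range f).bddBelow

lemma integral_Ioo_exp (a b : ℝ) : ∫ s in Ioo a b, rexp s = max (rexp b - rexp a) 0 := by
  rcases lt_or_ge a b with hab | hba
  · rw [← integral_Ioc_eq_integral_Ioo, ← intervalIntegral.integral_of_le hab.le, integral_exp,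
      max_eq_left (sub_nonneg.2 (Real.exp_le_exp.2 hab.le))]
  · rw [Ioo_eq_empty hba.not_gt, Measure.restrict_empty, integral_zero_measure,
      max_eq_right (sub_nonpos.2 (Real.exp_le_exp.2 hba))]

lemma integral_Ioi_cexp_neg_mul {c : ℂ} (hc : 0 < c.re) (a : ℝ) :
    ∫ u in Ioi a, cexp (-c * u) = cexp (-c * a) / c := by
  rw [integral_exp_mul_complex_Ioi (by simpa using hc), neg_div_neg_eq]

section CallKernel

variable {ι : Type*} [Fintype ι]

noncomputable def callKernel (a : ℝ) (c : ι → ℂ) (x : ι → ℝ) (t : ℝ) : ℂ :=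
  (Ioi a).indicator (fun s : ℝ => cexp s) t *
    ∏ j, (Ioi t).indicator (fun u : ℝ => cexp (-c j * u)) (x j)

variable (a : ℝ) (c : ι → ℂ)

lemma callKernel_eq_indicator [Nonempty ι] (x : ι → ℝ) :
    callKernel a c x =
      fun t => (∏ j, cexp (-c j * x j)) * (Ioo a (⨅ j, x j)).indicator (fun s : ℝ => cexp s) t := by
  ext t
  by_cases hx : ∀ j, t < x j
  · have ht : t < ⨅ j, x j := lt_ciInf_iff_of_finite.2 hx
    simp [callKernel, Set.indicator_apply, hx, ht, mul_comm]
  · obtain ⟨j, hj⟩ := not_forall.1 hx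
    have ht : ¬ t < ⨅ j, x j := fun h => hj (lt_ciInf_iff_of_finite.1 h j)
    have hprod : ∏ j, (Ioi t).indicator (fun u : ℝ => cexp (-c j * u)) (x j) = 0 :=
      Finset.prod_eq_zero (Finset.mem_univ j) (indicator_of_notMem hj _)
    rw [callKernel, hprod]
    simp [Set.indicator_apply, ht]

lemma integral_callKernel_snd [Nonempty ι] (x : ι → ℝ) :
    ∫ t, callKernel a c x t =
      cexp (-∑ j, c j * x j) * (max ((⨅ j, rexp (x j)) - rexp a) 0 : ℝ) := by
  rw [callKernel_eq_indicator, integral_const_mul, integral_indicator measurableSet_Ioo]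
  simp_rw [← Complex.ofReal_exp, integral_complex_ofReal, integral_Ioo_exp,
    Real.exp_ciInf_of_finite, ← Complex.exp_sum, ← Finset.sum_neg_distrib, neg_mul]

lemma integral_callKernel_fst (hc : ∀ j, 0 < (c j).re) (t : ℝ) :
    ∫ x, callKernel a c x t =
      (Ioi a).indicator (fun s : ℝ => cexp ((1 - ∑ j, c j) * s)) t / ∏ j, c j := by
  unfold callKernel
  rw [integral_const_mul, integral_fintype_prod_volume_eq_prod
    (fun j => (Ioi t).indicator fun u : ℝ => cexp (-c j * u))]
  simp_rw [integral_indicator measurableSet_Ioi, integral_Ioi_cexp_neg_mul (hc _),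
    Finset.prod_div_distrib, ← Complex.exp_sum]
  by_cases ht : t ∈ Ioi a
  · rw [indicator_of_mem ht, indicator_of_mem ht, mul_div_assoc', ← Complex.exp_add,
      ← Finset.sum_mul, Finset.sum_neg_distrib]
    ring_nf
  · simp [indicator_of_notMem ht]

lemma ofReal_norm_callKernel (x : ι → ℝ) (t : ℝ) :
    (‖callKernel a c x t‖ : ℂ) = callKernel a (fun j => ((c j).re : ℂ)) x t := by
  simp only [callKernel, norm_mul, norm_prod, Complex.ofReal_mul, Complex.ofReal_prod]
  congr 1
  · by_cases ht : t ∈ Ioi a <;> simp [ht, Complex.norm_exp]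
  · refine Finset.prod_congr rfl fun j _ => ?_
    by_cases hx : x j ∈ Ioi t <;> simp [hx, Complex.norm_exp]

lemma measurable_callKernel : Measurable (Function.uncurry (callKernel a c)) := by
  simp only [Function.uncurry_def, callKernel, Set.indicator_apply, mem_Ioi]
  refine .mul ?_ (Finset.measurable_prod _ fun j _ => ?_)
  · exact .ite (measurableSet_lt measurable_const measurable_snd) (by fun_prop) measurable_const
  · exact .ite (measurableSet_lt measurable_snd (by fun_prop)) (by fun_prop) measurable_const

lemma integral_norm_callKernel_fst (t : ℝ) :
    ∫ x, ‖callKernel a c x t‖ = ‖∫ x, callKernel a (fun j => ((c j).re : ℂ)) x t‖ := by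
  have hnonneg : 0 ≤ ∫ x, ‖callKernel a c x t‖ := integral_nonneg fun x => norm_nonneg _
  rw [← Real.norm_of_nonneg hnonneg, ← Complex.norm_real, ← integral_complex_ofReal]
  simp_rw [ofReal_norm_callKernel]

lemma integrable_callKernel (hc : ∀ j, 0 < (c j).re) (hsum : 1 < ∑ j, (c j).re) :
    Integrable (Function.uncurry (callKernel a c)) := by
  rw [Measure.volume_eq_prod,
    integrable_prod_iff' (measurable_callKernel a c).aestronglyMeasurable]
  constructor
  · refine .of_forall fun t => ?_
    simp only [Function.uncurry_apply_pair, callKernel]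
    refine Integrable.const_mul (Integrable.fintype_prod fun j => ?_) _
    exact (integrable_indicator_iff measurableSet_Ioi).2
      (integrableOn_exp_mul_complex_Ioi (by simpa using hc j) t)
  · simp_rw [Function.uncurry_apply_pair, integral_norm_callKernel_fst,
      integral_callKernel_fst a (fun j => ((c j).re : ℂ)) (by simpa using hc)]
    refine Integrable.norm (Integrable.div_const ?_ _)
    refine (integrable_indicator_iff measurableSet_Ioi).2 (integrableOn_exp_mul_complex_Ioi ?_ a)
    simpa using hsum

end CallKernel

/-- Generalized Fourier transform of the call-on-min payoff. -/
theorem call_on_min_transform (d : ℕ) (hd : 0 < d) (K : ℝ) (hK : 0 < K)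
    (z : Fin d → ℂ) (hz : ∀ j, (z j).im < 0) (hzsum : (∑ j, z j).im < -1) :
    (∫ x : Fin d → ℝ,
        Complex.exp (-(Complex.I * ∑ j, z j * (x j : ℂ))) *
          (max ((⨅ j, Real.exp (x j)) - K) 0 : ℝ)) =
      (K : ℂ) ^ ((1 : ℂ) - Complex.I * ∑ j, z j) /
        ((Complex.I * (∑ j, z j) - 1) * ∏ j, (Complex.I * z j)) := by
  have : Nonempty (Fin d) := Fin.pos_iff_nonempty.mp hd
  set c : Fin d → ℂ := fun j => Complex.I * z j
  have hc : ∀ j, 0 < (c j).re := fun j => by simpa [c] using hz j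
  have hsum : 1 < ∑ j, (c j).re := by
    simp only [c, Complex.I_mul_re, Finset.sum_neg_distrib, ← Complex.im_sum]
    linarith
  have hsum_c : ∑ j, c j = Complex.I * ∑ j, z j := Finset.mul_sum _ _ _ |>.symm
  calc _ = ∫ x, ∫ t, callKernel (Real.log K) c x t := integral_congr_ae <| .of_forall fun x => by
        simp only [integral_callKernel_snd, Real.exp_log hK, c, Finset.mul_sum, mul_assoc]
    _ = ∫ t, ∫ x, callKernel (Real.log K) c x t :=
        integral_integral_swap (integrable_callKernel _ c hc hsum)
    _ = (∫ t in Ioi (Real.log K), cexp ((1 - Complex.I * ∑ j, z j) * t)) / ∏ j, c j := by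
        simp_rw [integral_callKernel_fst _ c hc, hsum_c]
        rw [integral_div, integral_indicator measurableSet_Ioi]
    _ = _ := by
        have hre : (1 - Complex.I * ∑ j, z j).re < 0 := by
          simp only [Complex.sub_re, Complex.one_re, Complex.I_mul_re]
          linarith
        rw [integral_exp_mul_complex_Ioi hre,
          Complex.cpow_def_of_ne_zero (Complex.ofReal_ne_zero.2 hK.ne'), ← Complex.ofReal_log hK.le,
          ← neg_sub _ (1 : ℂ), neg_div_neg_eq, div_div, mul_comm (Real.log K : ℂ)]
end

section
/- Let X be an ℝ^d-valued random variable with density ρ, P : ℝ^d → ℝ continuous, and R ∈ ℝ^d such that (i) e^{⟨R,·⟩}P ∈ L^1(ℝ^d) with P̂(·+iR) ∈ L^1(ℝ^d) and (ii) E[e^{−⟨R,X⟩}] < ∞. Then E[P(X)] = (2π)^{−d} ∫_{ℝ^d} Φ_X(u + iR) P̂(u + iR) du, where Φ_X(z) = E[e^{i⟨z,X⟩}]. In particular the integral is real. -/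
/-!
Tilting by `e^{⟨R,·⟩}`: the function `g = e^{⟨R,·⟩} P` is continuous and integrable, and its
Fourier transform at `u` is `P̂(u + iR)`. Fourier inversion for `g`, multiplied by `e^{-⟨R,x⟩}`,
gives `P(x) = (2π)^{-d} ∫ e^{i⟨u+iR,x⟩} P̂(u+iR) du` for every `x`. Evaluating at `x = X` and
taking expectations, Fubini applies because `|e^{i⟨u+iR,X⟩} P̂(u+iR)| = e^{-⟨R,X⟩} |P̂(u+iR)|`
is integrable on `Ω × ℝ^d` by (i) and (ii); the inner expectation is then `Φ_X(u+iR)`.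
-/

open MeasureTheory Complex FourierTransform Real Module
open scoped RealInnerProductSpace

section InnerProductSpace

variable {V : Type*} [NormedAddCommGroup V] [InnerProductSpace ℝ V] [MeasurableSpace V]
  [BorelSpace V] [FiniteDimensional ℝ V]

lemma fourier_eq_integral_exp_inner (g : V → ℂ) (w : V) :
    𝓕 g w = ∫ y, cexp (-(I * ⟪(2 * π) • w, y⟫)) * g y := by
  rw [Real.fourier_eq']
  refine integral_congr_ae (.of_forall fun y => ?_)
  simp only [smul_eq_mul, real_inner_smul_left, real_inner_comm y w]
  push_cast
  ring_nf

theorem Continuous.fourier_inversion_angular {g : V → ℂ} (hc : Continuous g) (hi : Integrable g)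
    (hG : Integrable fun u : V => ∫ y, cexp (-(I * ⟪u, y⟫)) * g y) (x : V) :
    g x = (((2 * π) ^ finrank ℝ V)⁻¹ : ℝ) *
      ∫ u, cexp (I * ⟪u, x⟫) * ∫ y, cexp (-(I * ⟪u, y⟫)) * g y := by
  set F : V → ℂ := fun u => cexp (I * ⟪u, x⟫) * ∫ y, cexp (-(I * ⟪u, y⟫)) * g y
  have h2π : 2 * π ≠ 0 := by positivity
  have hfourier : Integrable (𝓕 g) := by
    simp_rw [funext (fourier_eq_integral_exp_inner g)]
    exact (integrable_comp_smul_iff volume _ h2π).2 hG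
  have hintegrand (w : V) : cexp (↑(2 * π * ⟪w, x⟫) * I) • 𝓕 g w = F ((2 * π) • w) := by
    simp only [F, smul_eq_mul, fourier_eq_integral_exp_inner, real_inner_smul_left]
    push_cast
    ring_nf
  conv_lhs => rw [← hc.fourierInv_fourier_eq hi hfourier, Real.fourierInv_eq']
  rw [integral_congr_ae (.of_forall hintegrand), Measure.integral_comp_smul volume F,
    abs_of_nonneg (by positivity), Complex.real_smul]

end InnerProductSpace

section Pi

variable {d : ℕ}

noncomputable def complexFourier (g : (Fin d → ℝ) → ℂ) (z : Fin d → ℂ) : ℂ :=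
  ∫ y, cexp (-(I * ∑ j, z j * y j)) * g y

lemma EuclideanSpace.ofReal_inner_eq_sum (u y : EuclideanSpace ℝ (Fin d)) :
    ((⟪u, y⟫ : ℝ) : ℂ) = ∑ j, (u.ofLp j : ℂ) * y.ofLp j := by
  simp [PiLp.inner_apply, mul_comm]

theorem Continuous.fourier_inversion_pi {g : (Fin d → ℝ) → ℂ} (hc : Continuous g)
    (hi : Integrable g) (hG : Integrable fun u : Fin d → ℝ => complexFourier g (fun j => u j))
    (x : Fin d → ℝ) :
    g x = (((2 * π) ^ d)⁻¹ : ℝ) *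
      ∫ u : Fin d → ℝ, cexp (I * ∑ j, (u j : ℂ) * x j) * complexFourier g (fun j => u j) := by
  let e := (MeasurableEquiv.toLp 2 (Fin d → ℝ)).symm
  have he : MeasurePreserving e := EuclideanSpace.volume_preserving_symm_measurableEquiv_toLp _
  have hfourier (u : EuclideanSpace ℝ (Fin d)) :
      ∫ y, cexp (-(I * ⟪u, y⟫)) * g (e y) = complexFourier g (fun j => e u j) := by
    rw [complexFourier, ← he.integral_comp']
    simp only [EuclideanSpace.ofReal_inner_eq_sum]
    rfl
  have hc' : Continuous fun y => g (e y) := hc.comp (PiLp.continuous_ofLp 2 _)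
  have hG' := (he.integrable_comp_emb e.measurableEmbedding).2 hG
  simp only [Function.comp_def, ← hfourier] at hG'
  have hinv := hc'.fourier_inversion_angular
    ((he.integrable_comp_emb e.measurableEmbedding).2 hi) hG' (e.symm x)
  simp only [hfourier, finrank_euclideanSpace_fin] at hinv
  simp only [EuclideanSpace.ofReal_inner_eq_sum] at hinv
  rw [← he.integral_comp']
  exact hinv

lemma sum_add_I_mul_mul (u R y : Fin d → ℝ) :
    ∑ j, ((u j : ℂ) + I * R j) * y j = ↑(∑ j, u j * y j) + I * ↑(∑ j, R j * y j) := by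
  push_cast
  rw [Finset.mul_sum, ← Finset.sum_add_distrib]
  exact Finset.sum_congr rfl fun j _ => by ring

lemma exp_neg_I_mul_sum_add_I_mul (u R y : Fin d → ℝ) :
    cexp (-(I * ∑ j, ((u j : ℂ) + I * R j) * y j)) =
      cexp (-(I * ∑ j, (u j : ℂ) * y j)) * rexp (∑ j, R j * y j) := by
  rw [sum_add_I_mul_mul, ofReal_exp, ← Complex.exp_add]
  push_cast
  congr 1
  linear_combination (-∑ j, (R j : ℂ) * y j) * I_mul_I

lemma exp_I_mul_sum_add_I_mul (u R x : Fin d → ℝ) :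
    cexp (I * ∑ j, ((u j : ℂ) + I * R j) * x j) =
      rexp (-∑ j, R j * x j) * cexp (I * ∑ j, (u j : ℂ) * x j) := by
  rw [sum_add_I_mul_mul, ofReal_exp, ← Complex.exp_add]
  push_cast
  congr 1
  linear_combination (∑ j, (R j : ℂ) * x j) * I_mul_I

lemma norm_exp_I_mul_sum_add_I_mul (u R x : Fin d → ℝ) :
    ‖cexp (I * ∑ j, ((u j : ℂ) + I * R j) * x j)‖ = rexp (-∑ j, R j * x j) := by
  rw [sum_add_I_mul_mul, Complex.norm_exp]
  simp

lemma complexFourier_add_I_mul (g : (Fin d → ℝ) → ℂ) (u R : Fin d → ℝ) :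
    complexFourier g (fun j => u j + I * R j) =
      complexFourier (fun y => rexp (∑ j, R j * y j) * g y) (fun j => u j) := by
  simp only [complexFourier, exp_neg_I_mul_sum_add_I_mul, mul_assoc]

theorem Continuous.fourier_inversion_add_I_mul {g : (Fin d → ℝ) → ℂ} (hc : Continuous g)
    (R : Fin d → ℝ) (hgR : Integrable fun y => rexp (∑ j, R j * y j) * g y)
    (hG : Integrable fun u : Fin d → ℝ => complexFourier g (fun j => u j + I * R j))
    (x : Fin d → ℝ) :
    g x = (((2 * π) ^ d)⁻¹ : ℝ) * ∫ u : Fin d → ℝ,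
      cexp (I * ∑ j, ((u j : ℂ) + I * R j) * x j) * complexFourier g (fun j => u j + I * R j) := by
  have hc' : Continuous fun y => (rexp (∑ j, R j * y j) : ℂ) * g y := by fun_prop
  simp only [complexFourier_add_I_mul] at hG ⊢
  have hinv := hc'.fourier_inversion_pi hgR hG x
  have hgx : g x = rexp (-∑ j, R j * x j) * (rexp (∑ j, R j * x j) * g x) := by
    rw [← mul_assoc, ← ofReal_mul, ← Real.exp_add, neg_add_cancel, Real.exp_zero, ofReal_one,
      one_mul]
  rw [hgx, hinv, mul_left_comm, ← integral_const_mul]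
  simp only [exp_I_mul_sum_add_I_mul, mul_assoc]

end Pi

section CharFun

variable {d : ℕ} {Ω : Type*} [MeasurableSpace Ω]

noncomputable def complexCharFun (X : Ω → Fin d → ℝ) (μ : Measure Ω) (z : Fin d → ℂ) : ℂ :=
  ∫ ω, cexp (I * ∑ j, z j * X ω j) ∂μ

lemma integral_integral_exp_mul_eq_integral_complexCharFun_mul {μ : Measure Ω} [SFinite μ]
    {X : Ω → Fin d → ℝ} (hX : Measurable X) (R : Fin d → ℝ)
    (hmom : Integrable (fun ω => rexp (-∑ j, R j * X ω j)) μ)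
    {G : (Fin d → ℝ) → ℂ} (hG : Integrable G) :
    ∫ ω, (∫ u : Fin d → ℝ, cexp (I * ∑ j, ((u j : ℂ) + I * R j) * X ω j) * G u) ∂μ =
      ∫ u : Fin d → ℝ, complexCharFun X μ (fun j => u j + I * R j) * G u := by
  have hint : Integrable (fun p : Ω × (Fin d → ℝ) =>
      cexp (I * ∑ j, ((p.2 j : ℂ) + I * R j) * X p.1 j) * G p.2) (μ.prod volume) := by
    refine (hmom.mul_prod hG.norm).mono' ?_ (.of_forall fun p => ?_)
    · exact (Measurable.aestronglyMeasurable (by fun_prop)).mul hG.aestronglyMeasurable.comp_snd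
    · rw [norm_mul, norm_exp_I_mul_sum_add_I_mul]
  rw [integral_integral_swap hint]
  simp only [complexCharFun, integral_mul_const]

end CharFun

theorem fourier_valuation_formula_general (d : ℕ) (Ω : Type*) [MeasureSpace Ω]
    (μ : Measure Ω) [IsProbabilityMeasure μ]
    (X : Ω → (Fin d → ℝ)) (hX : Measurable X)
    (P : (Fin d → ℝ) → ℝ) (hPc : Continuous P) (R : Fin d → ℝ)
    (hPR : Integrable (fun x : Fin d → ℝ => Real.exp (∑ j, R j * x j) * P x))
    (hPhat : Integrable (fun u : Fin d → ℝ =>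
      ∫ y : Fin d → ℝ,
        Complex.exp (-(Complex.I * ∑ j, ((u j : ℂ) + Complex.I * (R j : ℂ)) * (y j : ℂ))) *
          (P y : ℂ)))
    (hmom : Integrable (fun ω => Real.exp (-(∑ j, R j * X ω j))) μ) :
    ((∫ ω, P (X ω) ∂μ : ℝ) : ℂ) =
      (((2 * Real.pi) ^ d)⁻¹ : ℝ) *
        ∫ u : Fin d → ℝ,
          (∫ ω, Complex.exp (Complex.I * ∑ j, ((u j : ℂ) + Complex.I * (R j : ℂ)) * (X ω j : ℂ)) ∂μ) *
            ∫ y : Fin d → ℝ,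
              Complex.exp (-(Complex.I * ∑ j, ((u j : ℂ) + Complex.I * (R j : ℂ)) * (y j : ℂ))) *
                (P y : ℂ) := by
  have hPc' : Continuous fun y => (P y : ℂ) := by fun_prop
  have hPR' : Integrable fun y => (rexp (∑ j, R j * y j) : ℂ) * P y := by
    exact_mod_cast hPR.ofReal (𝕜 := ℂ)
  have hPhat' : Integrable fun u : Fin d → ℝ =>
      complexFourier (fun y => (P y : ℂ)) (fun j => u j + I * R j) := hPhat
  rw [← integral_complex_ofReal]
  simp_rw [hPc'.fourier_inversion_add_I_mul R hPR' hPhat' (X _)]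
  rw [integral_const_mul, integral_integral_exp_mul_eq_integral_complexCharFun_mul hX R hmom hPhat']
  rfl

/-- Multivariate Fourier pricing valuation formula:
`E[P(X)] = (2π)^{-d} ∫ Φ_X(u+iR) P̂(u+iR) du`. -/
theorem fourier_valuation_formula (d : ℕ) (Ω : Type*) [MeasureSpace Ω]
    (μ : Measure Ω) [IsProbabilityMeasure μ]
    (X : Ω → (Fin d → ℝ)) (hX : Measurable X)
    (ρ : (Fin d → ℝ) → ℝ) (hρ0 : ∀ x, 0 ≤ ρ x)
    (hρ : Measure.map X μ = volume.withDensity (fun x => ENNReal.ofReal (ρ x)))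
    (P : (Fin d → ℝ) → ℝ) (hPc : Continuous P) (R : Fin d → ℝ)
    (hPR : Integrable (fun x : Fin d → ℝ => Real.exp (∑ j, R j * x j) * P x))
    (hPhat : Integrable (fun u : Fin d → ℝ =>
      ∫ y : Fin d → ℝ,
        Complex.exp (-(Complex.I * ∑ j, ((u j : ℂ) + Complex.I * (R j : ℂ)) * (y j : ℂ))) *
          (P y : ℂ)))
    (hmom : Integrable (fun ω => Real.exp (-(∑ j, R j * X ω j))) μ) :
    ((∫ ω, P (X ω) ∂μ : ℝ) : ℂ) =
      (((2 * Real.pi) ^ d)⁻¹ : ℝ) *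
        ∫ u : Fin d → ℝ,
          (∫ ω, Complex.exp (Complex.I * ∑ j, ((u j : ℂ) + Complex.I * (R j : ℂ)) * (X ω j : ℂ)) ∂μ) *
            ∫ y : Fin d → ℝ,
              Complex.exp (-(Complex.I * ∑ j, ((u j : ℂ) + Complex.I * (R j : ℂ)) * (y j : ℂ))) *
                (P y : ℂ) :=
  fourier_valuation_formula_general d Ω μ X hX P hPc R hPR hPhat hmom
end

section
/- For d ≥ 1, the set δ_P = {R ∈ ℝ^d : R_i < 0 for all i and Σ_i R_i < −1} (the strip of regularity of the call-on-min payoff transform) is a nonempty open convex cone-truncation; moreover for every R ∈ δ_P the dampened call-on-min payoff x ↦ e^{⟨R,x⟩} max(min(e^{x_1},…,e^{x_d}) − K, 0), with K > 0, is integrable on ℝ^d. -/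
/-!
On the support of the payoff every coordinate exceeds `log K`, and the minimum of the `e^{x_j}`
is at most the weighted geometric mean `e^{⟨θ, x⟩}` for any probability vector `θ`. Taking
`θ = R / ∑ R`, the dampened payoff is dominated by `∏ⱼ 1_{x_j > log K} e^{(R_j + θ_j) x_j}`, and
`R_j + θ_j = R_j (1 + 1 / ∑ R) < 0` precisely because `∑ R < -1`: the dominating function is a
product of integrable one-dimensional exponential tails.
-/

open MeasureTheory Set

section Strip

variable (ι : Type*) [Fintype ι]

def callOnMinStrip : Set (ι → ℝ) := {R | (∀ i, R i < 0) ∧ ∑ i, R i < -1}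

theorem callOnMinStrip_eq_iInter_inter :
    callOnMinStrip ι = (⋂ i, {R : ι → ℝ | R i < 0}) ∩ {R | ∑ i, R i < -1} := by
  ext R
  simp [callOnMinStrip]

theorem callOnMinStrip_nonempty [Nonempty ι] : (callOnMinStrip ι).Nonempty := by
  refine ⟨fun _ => -2, fun _ => by norm_num, ?_⟩
  have hcard : (1 : ℝ) ≤ Fintype.card ι := by exact_mod_cast Fintype.card_pos
  simp only [Finset.sum_const, Finset.card_univ, nsmul_eq_mul]
  linarith

theorem isOpen_callOnMinStrip : IsOpen (callOnMinStrip ι) := by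
  rw [callOnMinStrip_eq_iInter_inter]
  exact (isOpen_iInter_of_finite fun i => isOpen_lt (continuous_apply i) continuous_const).inter
    (isOpen_lt (by fun_prop) continuous_const)

theorem convex_callOnMinStrip : Convex ℝ (callOnMinStrip ι) := by
  rw [callOnMinStrip_eq_iInter_inter]
  exact (convex_iInter fun i => convex_halfSpace_lt ⟨fun _ _ => rfl, fun _ _ => rfl⟩ 0).inter
    (convex_halfSpace_lt ⟨fun _ _ => Finset.sum_add_distrib, fun _ _ => Finset.mul_sum _ _ _ |>.symm⟩
      (-1))

end Strip

section Domination

variable {ι : Type*} [Fintype ι]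

theorem iInf_le_weighted_sum (f θ : ι → ℝ) (hθ : ∀ j, 0 ≤ θ j) (hθ1 : ∑ j, θ j = 1) :
    ⨅ j, f j ≤ ∑ j, θ j * f j :=
  calc ⨅ j, f j = ∑ j, θ j * ⨅ j, f j := by rw [← Finset.sum_mul, hθ1, one_mul]
    _ ≤ ∑ j, θ j * f j := Finset.sum_le_sum fun j _ =>
      mul_le_mul_of_nonneg_left (ciInf_le (Finite.bddBelow_range f) j) (hθ j)

theorem iInf_exp_le_exp_weighted_sum (x θ : ι → ℝ) (hθ : ∀ j, 0 ≤ θ j)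
    (hθ1 : ∑ j, θ j = 1) : ⨅ j, Real.exp (x j) ≤ Real.exp (∑ j, θ j * x j) := by
  have : Nonempty ι := by
    by_contra h
    simp [not_nonempty_iff.mp h] at hθ1
  rw [← Monotone.map_ciInf_of_continuousAt Real.continuous_exp.continuousAt Real.exp_monotone
    (Finite.bddBelow_range x)]
  exact Real.exp_le_exp.mpr (iInf_le_weighted_sum x θ hθ hθ1)

theorem max_iInf_exp_sub_eq_zero_of_le_log {K : ℝ} (hK : 0 < K) {x : ι → ℝ} {j : ι}
    (hj : x j ≤ Real.log K) : max ((⨅ i, Real.exp (x i)) - K) 0 = 0 := by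
  have : (⨅ i, Real.exp (x i)) ≤ K :=
    calc (⨅ i, Real.exp (x i)) ≤ Real.exp (x j) := ciInf_le (Finite.bddBelow_range _) j
      _ ≤ K := (Real.le_log_iff_exp_le hK).mp hj
  exact max_eq_right (by linarith)

theorem norm_exp_mul_callOnMin_le {K : ℝ} (hK : 0 < K) (R θ : ι → ℝ) (hθ : ∀ j, 0 ≤ θ j)
    (hθ1 : ∑ j, θ j = 1) (x : ι → ℝ) :
    ‖Real.exp (∑ j, R j * x j) * max ((⨅ j, Real.exp (x j)) - K) 0‖ ≤
      ∏ j, (Ioi (Real.log K)).indicator (fun t => Real.exp ((R j + θ j) * t)) (x j) := by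
  by_cases hx : ∀ j, x j ∈ Ioi (Real.log K)
  · have hprod : ∏ j, (Ioi (Real.log K)).indicator (fun t => Real.exp ((R j + θ j) * t)) (x j) =
        Real.exp (∑ j, R j * x j) * Real.exp (∑ j, θ j * x j) := by
      rw [← Real.exp_add, ← Finset.sum_add_distrib, Real.exp_sum]
      exact Finset.prod_congr rfl fun j _ => by rw [indicator_of_mem (hx j), add_mul]
    rw [hprod, norm_mul, Real.norm_of_nonneg (Real.exp_pos _).le,
      Real.norm_of_nonneg (le_max_right _ _)]
    gcongr
    exact max_le (by linarith [iInf_exp_le_exp_weighted_sum x θ hθ hθ1]) (Real.exp_pos _).le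
  · obtain ⟨j, hj⟩ := not_forall.mp hx
    rw [max_iInf_exp_sub_eq_zero_of_le_log hK (not_lt.mp hj), mul_zero, norm_zero]
    exact Finset.prod_nonneg fun j _ => indicator_nonneg (fun t _ => (Real.exp_pos _).le) _

theorem integrable_prod_indicator_Ioi_exp (a : ℝ) (c : ι → ℝ) (hc : ∀ j, c j < 0) :
    Integrable fun x : ι → ℝ => ∏ j, (Ioi a).indicator (fun t => Real.exp (c j * t)) (x j) := by
  refine Integrable.fintype_prod fun j => (integrable_indicator_iff measurableSet_Ioi).mpr ?_
  simpa using exp_neg_integrableOn_Ioi a (neg_pos.mpr (hc j))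

end Domination

theorem integrable_exp_mul_callOnMin {ι : Type*} [Fintype ι] {K : ℝ} (hK : 0 < K) {R : ι → ℝ}
    (hR : R ∈ callOnMinStrip ι) :
    Integrable fun x : ι → ℝ => Real.exp (∑ j, R j * x j) * max ((⨅ j, Real.exp (x j)) - K) 0 := by
  obtain ⟨hneg, hsum⟩ := hR
  set θ : ι → ℝ := fun j => R j / ∑ i, R i
  have hθ : ∀ j, 0 ≤ θ j := fun j => div_nonneg_of_nonpos (hneg j).le (by linarith)
  have hθ1 : ∑ j, θ j = 1 := by rw [← Finset.sum_div, div_self (by linarith)]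
  have hdecay : ∀ j, R j + θ j < 0 := fun j => by
    have : -1 < 1 / ∑ i, R i := by
      rw [lt_div_iff_of_neg (by linarith)]
      linarith
    calc R j + θ j = R j * (1 + 1 / ∑ i, R i) := by simp only [θ]; ring
      _ < 0 := mul_neg_of_neg_of_pos (hneg j) (by linarith)
  exact (integrable_prod_indicator_Ioi_exp (Real.log K) _ hdecay).mono' (by fun_prop)
    (Filter.Eventually.of_forall (norm_exp_mul_callOnMin_le hK R θ hθ hθ1))

/-- The strip of regularity of the call-on-min payoff transform is nonempty, open
and convex, and for every `R` in it the dampened call-on-min payoff is integrable. -/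
theorem call_on_min_strip (d : ℕ) (hd : 0 < d) (K : ℝ) (hK : 0 < K) :
    ({R : Fin d → ℝ | (∀ i, R i < 0) ∧ ∑ i, R i < -1}).Nonempty ∧
      IsOpen {R : Fin d → ℝ | (∀ i, R i < 0) ∧ ∑ i, R i < -1} ∧
      Convex ℝ {R : Fin d → ℝ | (∀ i, R i < 0) ∧ ∑ i, R i < -1} ∧
      ∀ R : Fin d → ℝ, ((∀ i, R i < 0) ∧ ∑ i, R i < -1) →
        Integrable (fun x : Fin d → ℝ =>
          Real.exp (∑ j, R j * x j) * max ((⨅ j, Real.exp (x j)) - K) 0) := by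
  have : Nonempty (Fin d) := Fin.pos_iff_nonempty.mp hd
  exact ⟨callOnMinStrip_nonempty _, isOpen_callOnMinStrip _, convex_callOnMinStrip _,
    fun R hR => integrable_exp_mul_callOnMin hK hR⟩
end

section
/- For d ≥ 1 and R ∈ ℝ^d with R_i > 0 for all i, the dampened basket put payoff x ↦ e^{⟨R,x⟩} max(K − Σ_{i=1}^d e^{x_i}, 0), K > 0, is bounded, continuous, and integrable on ℝ^d. -/
open MeasureTheory

lemma dbp_coord_lt {d : ℕ} (K : ℝ) (hK : 0 < K) (x : Fin d → ℝ)
    (h : K - ∑ i, Real.exp (x i) > 0) (i : Fin d) : x i ≤ Real.log K := by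
  have h1 : Real.exp (x i) ≤ ∑ j, Real.exp (x j) :=
    Finset.single_le_sum (fun j _ => (Real.exp_pos _).le) (Finset.mem_univ i)
  have h2 : Real.exp (x i) ≤ K := by linarith
  calc x i = Real.log (Real.exp (x i)) := (Real.log_exp _).symm
    _ ≤ Real.log K := Real.log_le_log (Real.exp_pos _) h2

/-- The dampened basket put payoff is bounded, continuous and integrable when all
damping parameters are positive. -/
theorem dampened_basket_put_properties (d : ℕ) (K : ℝ) (hK : 0 < K)
    (R : Fin d → ℝ) (hR : ∀ i, 0 < R i) :
    (∃ C : ℝ, ∀ x : Fin d → ℝ,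
        |Real.exp (∑ j, R j * x j) * max (K - ∑ i, Real.exp (x i)) 0| ≤ C) ∧
      Continuous (fun x : Fin d → ℝ =>
        Real.exp (∑ j, R j * x j) * max (K - ∑ i, Real.exp (x i)) 0) ∧
      Integrable (fun x : Fin d → ℝ =>
        Real.exp (∑ j, R j * x j) * max (K - ∑ i, Real.exp (x i)) 0) := by
  set f : (Fin d → ℝ) → ℝ := fun x =>
    Real.exp (∑ j, R j * x j) * max (K - ∑ i, Real.exp (x i)) 0 with hf
  have hcont : Continuous f := by
    apply Continuous.mul
    · exact (continuous_finset_sum _ fun j _ =>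
        (continuous_const.mul (continuous_apply j))).rexp
    · exact ((continuous_const.sub (continuous_finset_sum _ fun i _ =>
        (continuous_apply i).rexp)).max continuous_const)
  -- the dominating single-variable functions
  set g : Fin d → ℝ → ℝ := fun i => (Set.Iic (Real.log K)).indicator
    (fun t => Real.exp (R i * t)) with hg
  have hgint : ∀ i, Integrable (g i) := by
    intro i
    have h1 : Integrable ((Set.Iic (R i * Real.log K)).indicator Real.exp) := by
      rw [integrable_indicator_iff measurableSet_Iic]
      exact integrableOn_exp_Iic _
    have h2 := h1.comp_mul_left' (hR i).ne'
    have : (fun t => ((Set.Iic (R i * Real.log K)).indicator Real.exp) (R i * t)) = g i := by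
      funext t
      simp only [hg, Set.indicator_apply, Set.mem_Iic]
      by_cases ht : t ≤ Real.log K
      · rw [if_pos ht, if_pos (mul_le_mul_of_nonneg_left ht (hR i).le)]
      · rw [if_neg ht, if_neg]
        intro hc
        exact ht (le_of_mul_le_mul_left hc (hR i))
    rwa [this] at h2
  -- the pointwise bound
  have hbound : ∀ x : Fin d → ℝ, |f x| ≤ K * ∏ i, g i (x i) := by
    intro x
    by_cases h : K - ∑ i, Real.exp (x i) > 0
    · have hle : ∀ i, x i ≤ Real.log K := dbp_coord_lt K hK x h
      have hgx : ∀ i, g i (x i) = Real.exp (R i * x i) := fun i => by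
        simp only [hg, Set.indicator_apply, Set.mem_Iic, if_pos (hle i)]
      have hprod : ∏ i, g i (x i) = Real.exp (∑ j, R j * x j) := by
        rw [Real.exp_sum]
        exact Finset.prod_congr rfl fun i _ => hgx i
      have hfx : f x = Real.exp (∑ j, R j * x j) * (K - ∑ i, Real.exp (x i)) := by
        rw [hf]; simp [max_eq_left h.le]
      rw [hfx, hprod, abs_of_nonneg (by positivity)]
      have : (K - ∑ i, Real.exp (x i)) ≤ K := by
        have : 0 ≤ ∑ i, Real.exp (x i) :=
          Finset.sum_nonneg fun i _ => (Real.exp_pos _).le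
        linarith
      calc Real.exp (∑ j, R j * x j) * (K - ∑ i, Real.exp (x i))
          ≤ Real.exp (∑ j, R j * x j) * K :=
            mul_le_mul_of_nonneg_left this (Real.exp_pos _).le
        _ = K * Real.exp (∑ j, R j * x j) := mul_comm _ _
    · have hfx : f x = 0 := by
        rw [hf]; simp only [max_eq_right (by linarith : K - ∑ i, Real.exp (x i) ≤ 0), mul_zero]
      rw [hfx, abs_zero]
      apply mul_nonneg hK.le
      exact Finset.prod_nonneg fun i _ =>
        Set.indicator_nonneg (fun t _ => (Real.exp_pos _).le) _
  refine ⟨⟨K * Real.exp ((∑ j, R j) * Real.log K), fun x => ?_⟩, hcont, ?_⟩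
  · refine (hbound x).trans ?_
    apply mul_le_mul_of_nonneg_left _ hK.le
    calc ∏ i, g i (x i) ≤ ∏ i, Real.exp (R i * Real.log K) := by
          apply Finset.prod_le_prod
          · exact fun i _ => Set.indicator_nonneg (fun t _ => (Real.exp_pos _).le) _
          · intro i _
            simp only [hg, Set.indicator_apply, Set.mem_Iic]
            by_cases ht : x i ≤ Real.log K
            · rw [if_pos ht]
              exact Real.exp_le_exp.2 (mul_le_mul_of_nonneg_left ht (hR i).le)
            · rw [if_neg ht]
              exact (Real.exp_pos _).le
      _ = Real.exp ((∑ j, R j) * Real.log K) := by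
          rw [← Real.exp_sum, Finset.sum_mul]
  · have hdom : Integrable (fun x : Fin d → ℝ => K * ∏ i, g i (x i)) :=
      (Integrable.fintype_prod hgint).const_mul K
    exact hdom.mono hcont.aestronglyMeasurable
      (Filter.Eventually.of_forall fun x => by
        rw [Real.norm_eq_abs]
        refine (hbound x).trans ?_
        exact le_abs_self _)
end

section
/- For d = 2 and z = (z_1, z_2) ∈ ℂ² with Im(z_1), Im(z_2) > 0 and K > 0, the generalized Fourier transform of the basket put payoff P(x) = max(K − e^{x_1} − e^{x_2}, 0) equals P̂(z) = K^{1 − i(z_1+z_2)} Γ(−iz_1)Γ(−iz_2)/Γ(−i(z_1+z_2) + 2). -/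
/-!
The substitution `s = exp x` turns `∫ exp (a x) (M - exp x)₊ ^ v dx` into the truncated
Beta-type integral `∫₀^M s ^ (a - 1) (M - s) ^ v ds = M ^ (a + v) B(a, v + 1)`. By Fubini, the
inner integral over `x₂` is this formula with `v = 1` and `M = K - exp x₁`, which leaves
`(K - exp x₁)₊ ^ (b + 1) Γ(b) / Γ(b + 2)`; the formula with `v = b + 1` then evaluates the outer
integral. Here `a = -i z₁`, `b = -i z₂`, so `Re a = Im z₁` and `Re b = Im z₂`. The payoff vanishes
unless `x₁, x₂ ≤ log K`, which makes the integrand dominated by a product of integrable functions.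
-/

open MeasureTheory Set

theorem Complex.ofReal_exp_cpow (x : ℝ) (w : ℂ) :
    (Real.exp x : ℂ) ^ w = Complex.exp (w * x) := by
  rw [Complex.ofReal_exp, Complex.cpow_def_of_ne_zero (Complex.exp_ne_zero _),
    Complex.log_exp (by simpa using Real.pi_pos) (by simpa using Real.pi_pos.le), mul_comm]

theorem integral_exp_mul_comp_exp (a : ℂ) (g : ℝ → ℂ) :
    ∫ x : ℝ, Complex.exp (a * x) * g (Real.exp x) =
      ∫ s in Ioi (0 : ℝ), (s : ℂ) ^ (a - 1) * g s := by
  rw [← Real.range_exp, ← image_univ, integral_image_eq_integral_abs_deriv_smul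
    MeasurableSet.univ (fun x _ => (Real.hasDerivAt_exp x).hasDerivWithinAt)
    Real.exp_injective.injOn, setIntegral_univ]
  congr 1 with x
  rw [abs_of_pos (Real.exp_pos x), Complex.real_smul, Complex.ofReal_exp_cpow, ← mul_assoc,
    Complex.ofReal_exp, ← Complex.exp_add]
  congr 2
  ring

theorem integral_cpow_mul_max_sub_cpow {M : ℝ} (hM : 0 < M) (a : ℂ) {v : ℂ} (hv : v ≠ 0) :
    ∫ s in Ioi (0 : ℝ), (s : ℂ) ^ (a - 1) * ((max (M - s) 0 : ℝ) : ℂ) ^ v =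
      (M : ℂ) ^ (a + v) * Complex.betaIntegral a (v + 1) := by
  have hvanish : ∀ s ∈ Ioi (0 : ℝ) \ Ioc 0 M,
      (s : ℂ) ^ (a - 1) * ((max (M - s) 0 : ℝ) : ℂ) ^ v = 0 := by
    rintro s ⟨hs₀, hs⟩
    have hMs : M - s ≤ 0 := by
      simp only [mem_Ioi, mem_Ioc, not_and, not_le] at hs₀ hs
      linarith [hs hs₀]
    simp [max_eq_right hMs, Complex.zero_cpow hv]
  rw [setIntegral_eq_of_subset_of_forall_sdiff_eq_zero measurableSet_Ioi Ioc_subset_Ioi_self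
    hvanish, ← intervalIntegral.integral_of_le hM.le]
  have hscaled := Complex.betaIntegral_scaled a (v + 1) hM
  rw [add_sub_cancel_right, ← add_assoc, add_sub_cancel_right] at hscaled
  rw [← hscaled]
  refine intervalIntegral.integral_congr fun s hs => ?_
  rw [uIcc_of_le hM.le] at hs
  simp [max_eq_left (sub_nonneg.2 hs.2)]

theorem integral_exp_mul_max_sub_exp_cpow (M : ℝ) {a v : ℂ} (ha : 0 < a.re) (hv : 0 < v.re) :
    ∫ x : ℝ, Complex.exp (a * x) * ((max (M - Real.exp x) 0 : ℝ) : ℂ) ^ v =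
      ((max M 0 : ℝ) : ℂ) ^ (a + v) * Complex.Gamma a * Complex.Gamma (v + 1) /
        Complex.Gamma (a + v + 1) := by
  have hv₀ : v ≠ 0 := ne_of_apply_ne Complex.re (by rw [Complex.zero_re]; exact hv.ne')
  rcases le_or_gt M 0 with hM | hM
  · have hzero (x : ℝ) : max (M - Real.exp x) 0 = 0 :=
      max_eq_right (by linarith [Real.exp_pos x])
    have hav : a + v ≠ 0 :=
      ne_of_apply_ne Complex.re (by rw [Complex.add_re, Complex.zero_re]; linarith)
    simp [hzero, max_eq_right hM, Complex.zero_cpow hv₀, Complex.zero_cpow hav]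
  · have hv₁ : 0 < (v + 1).re := by rw [Complex.add_re, Complex.one_re]; linarith
    rw [integral_exp_mul_comp_exp a fun s => ((max (M - s) 0 : ℝ) : ℂ) ^ v,
      integral_cpow_mul_max_sub_cpow hM a hv₀, Complex.betaIntegral_eq_Gamma_mul_div _ _ ha hv₁,
      max_eq_left hM.le, add_assoc]
    ring

theorem norm_exp_mul_exp_mul_max_sub_exp_sub_exp_le {K : ℝ} (hK : 0 < K) (a b : ℂ)
    (x : ℝ × ℝ) :
    ‖Complex.exp (a * x.1) *
        (Complex.exp (b * x.2) * ((max (K - Real.exp x.1 - Real.exp x.2) 0 : ℝ) : ℂ))‖ ≤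
      (Iic (Real.log K)).indicator (fun t => K * Real.exp (a.re * t)) x.1 *
        (Iic (Real.log K)).indicator (fun t => Real.exp (b.re * t)) x.2 := by
  obtain ⟨x₁, x₂⟩ := x
  simp only [norm_mul, Complex.norm_exp, Complex.re_mul_ofReal, Complex.norm_real]
  rcases le_or_gt (K - Real.exp x₁ - Real.exp x₂) 0 with hp | hp
  · rw [max_eq_right hp, norm_zero, mul_zero, mul_zero]
    exact mul_nonneg (indicator_nonneg (fun _ _ => by positivity) _)
      (indicator_nonneg (fun _ _ => by positivity) _)
  · have hx₁ : x₁ ≤ Real.log K :=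
      (Real.le_log_iff_exp_le hK).2 (by linarith [Real.exp_pos x₂])
    have hx₂ : x₂ ≤ Real.log K :=
      (Real.le_log_iff_exp_le hK).2 (by linarith [Real.exp_pos x₁])
    rw [indicator_of_mem (mem_Iic.2 hx₁), indicator_of_mem (mem_Iic.2 hx₂), max_eq_left hp.le,
      Real.norm_of_nonneg hp.le]
    calc Real.exp (a.re * x₁) * (Real.exp (b.re * x₂) * (K - Real.exp x₁ - Real.exp x₂))
        ≤ Real.exp (a.re * x₁) * (Real.exp (b.re * x₂) * K) := by
          gcongr; linarith [Real.exp_pos x₁, Real.exp_pos x₂]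
      _ = K * Real.exp (a.re * x₁) * Real.exp (b.re * x₂) := by ring

theorem integrable_exp_mul_exp_mul_max_sub_exp_sub_exp {K : ℝ} (hK : 0 < K) {a b : ℂ}
    (ha : 0 < a.re) (hb : 0 < b.re) :
    Integrable fun x : ℝ × ℝ => Complex.exp (a * x.1) *
      (Complex.exp (b * x.2) * ((max (K - Real.exp x.1 - Real.exp x.2) 0 : ℝ) : ℂ)) := by
  have hbound₁ := (integrable_indicator_iff measurableSet_Iic).2
    ((integrableOn_exp_mul_Iic ha (Real.log K)).const_mul K)
  have hbound₂ := (integrable_indicator_iff measurableSet_Iic).2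
    (integrableOn_exp_mul_Iic hb (Real.log K))
  exact (hbound₁.mul_prod hbound₂).mono' (by fun_prop)
    (ae_of_all _ (norm_exp_mul_exp_mul_max_sub_exp_sub_exp_le hK a b))

theorem integral_exp_mul_exp_mul_max_sub_exp_sub_exp {K : ℝ} (hK : 0 < K) {a b : ℂ}
    (ha : 0 < a.re) (hb : 0 < b.re) :
    ∫ x : ℝ × ℝ, Complex.exp (a * x.1) *
        (Complex.exp (b * x.2) * ((max (K - Real.exp x.1 - Real.exp x.2) 0 : ℝ) : ℂ)) =
      (K : ℂ) ^ (a + b + 1) * Complex.Gamma a * Complex.Gamma b / Complex.Gamma (a + b + 2) := by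
  have hinner (x₁ : ℝ) :
      ∫ x₂ : ℝ, Complex.exp (b * x₂) * ((max (K - Real.exp x₁ - Real.exp x₂) 0 : ℝ) : ℂ) =
        ((max (K - Real.exp x₁) 0 : ℝ) : ℂ) ^ (b + 1) *
          (Complex.Gamma b / Complex.Gamma (b + 2)) := by
    have h := integral_exp_mul_max_sub_exp_cpow (K - Real.exp x₁) hb (v := 1) (by simp)
    simp only [Complex.cpow_one] at h
    rw [h, Complex.Gamma_add_one 1 one_ne_zero, Complex.Gamma_one, add_assoc, one_add_one_eq_two]
    ring
  have hb₁ : 0 < (b + 1).re := by rw [Complex.add_re, Complex.one_re]; linarith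
  have hGamma : Complex.Gamma (b + 2) ≠ 0 :=
    Complex.Gamma_ne_zero_of_re_pos (by rw [Complex.add_re, Complex.re_ofNat]; linarith)
  rw [Measure.volume_eq_prod,
    integral_prod _ (integrable_exp_mul_exp_mul_max_sub_exp_sub_exp hK ha hb)]
  simp only [integral_const_mul, hinner]
  simp only [← mul_assoc]
  rw [integral_mul_const, integral_exp_mul_max_sub_exp_cpow K ha hb₁, max_eq_left hK.le,
    show b + 1 + 1 = b + 2 by ring, show a + (b + 1) = a + b + 1 by ring,
    show a + b + 1 + 1 = a + b + 2 by ring]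
  field_simp

/-- Generalized Fourier transform of the 2D basket put payoff. -/
theorem basket_put_transform_2d (K : ℝ) (hK : 0 < K) (z₁ z₂ : ℂ)
    (hz₁ : 0 < z₁.im) (hz₂ : 0 < z₂.im) :
    (∫ x : ℝ × ℝ,
        Complex.exp (-(Complex.I * (z₁ * (x.1 : ℂ) + z₂ * (x.2 : ℂ)))) *
          (max (K - Real.exp x.1 - Real.exp x.2) 0 : ℝ)) =
      (K : ℂ) ^ ((1 : ℂ) - Complex.I * (z₁ + z₂)) *
        Complex.Gamma (-(Complex.I * z₁)) * Complex.Gamma (-(Complex.I * z₂)) /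
        Complex.Gamma (-(Complex.I * (z₁ + z₂)) + 2) := by
  have hintegrand (x : ℝ × ℝ) :
      Complex.exp (-(Complex.I * (z₁ * x.1 + z₂ * x.2))) *
          (max (K - Real.exp x.1 - Real.exp x.2) 0 : ℝ) =
        Complex.exp (-(Complex.I * z₁) * x.1) * (Complex.exp (-(Complex.I * z₂) * x.2) *
          (max (K - Real.exp x.1 - Real.exp x.2) 0 : ℝ)) := by
    rw [← mul_assoc, ← Complex.exp_add]
    congr 2
    ring
  simp_rw [hintegrand]
  rw [integral_exp_mul_exp_mul_max_sub_exp_sub_exp hK (by simpa using hz₁) (by simpa using hz₂),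
    ← neg_add, ← mul_add, neg_add_eq_sub]
end
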